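/- arXiv:1912.06807 — 2 statements merged into one kernel-verified Lean document; each statement's English description precedes it below -/
import Mathlib

section
/- Ankum's observation: for fixed d₁₂, d₁₃, d₂₃, d₁₄, d₂₄, d₃₄, the polynomial t ↦ CM(d₁₂, d₁₃, d₁₄+t, d₂₃, d₂₄+t, d₃₄+t) is a polynomial of degree at most 2 in t. -/
/-!
Write `(d_{i4} + t)² = (d_{i4}² + 2 d_{i4} t) + t²`. Subtracting `t²` times the first row and
then `t²` times the first column of the Cayley–Menger matrix from its last row and column removes
the `t²` from the three shifted entries and leaves `-2t²` in the corner, without changing the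
determinant. In the Leibniz expansion each product then uses one entry of the last row and one of
the last column (the corner counting for both), all other factors being constant, so the
determinant has degree at most 2 in `t`.
-/

open Polynomial Matrix

/-- Half the 5×5 Cayley–Menger determinant. -/
noncomputable def CM (x12 x13 x14 x23 x24 x34 : ℝ) : ℝ :=
  Matrix.det !![(0 : ℝ), 1, 1, 1, 1;
                1, 0, x12^2, x13^2, x14^2;
                1, x12^2, 0, x23^2, x24^2;
                1, x13^2, x23^2, 0, x34^2;
                1, x14^2, x24^2, x34^2, 0] / 2

theorem Polynomial.natDegree_det_le_sum_add_sum {n R : Type*} [Fintype n] [DecidableEq n]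
    [CommRing R] (M : Matrix n n R[X]) (r c : n → ℕ)
    (hM : ∀ i j, (M i j).natDegree ≤ r i + c j) :
    M.det.natDegree ≤ ∑ i, r i + ∑ j, c j := by
  rw [det_apply]
  refine natDegree_sum_le_of_forall_le _ _ fun σ _ => ?_
  calc (σ.sign • ∏ i, M (σ i) i).natDegree
      ≤ (∏ i, M (σ i) i).natDegree := natDegree_smul_le _ _
    _ ≤ ∑ i, (M (σ i) i).natDegree := natDegree_prod_le _ _
    _ ≤ ∑ i, (r (σ i) + c i) := Finset.sum_le_sum fun i _ => hM _ _
    _ = ∑ i, r i + ∑ j, c j := by rw [Finset.sum_add_distrib, Equiv.sum_comp σ r]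

def cayleyMengerMatrix {R : Type*} [Zero R] [One R] (a12 a13 a14 a23 a24 a34 : R) :
    Matrix (Fin 5) (Fin 5) R :=
  !![0, 1, 1, 1, 1;
     1, 0, a12, a13, a14;
     1, a12, 0, a23, a24;
     1, a13, a23, 0, a34;
     1, a14, a24, a34, 0]

theorem CM_eq_det_cayleyMengerMatrix (x12 x13 x14 x23 x24 x34 : ℝ) :
    CM x12 x13 x14 x23 x24 x34 =
      (cayleyMengerMatrix (x12^2) (x13^2) (x14^2) (x23^2) (x24^2) (x34^2)).det / 2 := rfl

section CayleyMenger

variable {R : Type*} [CommRing R]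

theorem RingHom.mapMatrix_cayleyMengerMatrix {S : Type*} [CommRing S] (f : R →+* S)
    (a12 a13 a14 a23 a24 a34 : R) :
    f.mapMatrix (cayleyMengerMatrix a12 a13 a14 a23 a24 a34) =
      cayleyMengerMatrix (f a12) (f a13) (f a14) (f a23) (f a24) (f a34) := by
  ext i j
  fin_cases i <;> fin_cases j <;> simp [cayleyMengerMatrix]

theorem det_cayleyMengerMatrix_add_fourth (a12 a13 a14 a23 a24 a34 s : R) :
    (cayleyMengerMatrix a12 a13 (a14 + s) a23 (a24 + s) (a34 + s)).det =
      (cayleyMengerMatrix a12 a13 a14 a23 a24 a34 - single 4 4 (2 * s)).det := by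
  set B := cayleyMengerMatrix a12 a13 a14 a23 a24 a34 - single 4 4 (2 * s)
  set B' := updateRow B 4 (B 4 + s • B 0)
  have hB : cayleyMengerMatrix a12 a13 (a14 + s) a23 (a24 + s) (a34 + s) =
      updateCol B' 4 fun k => B' k 4 + s • B' k 0 := by
    ext i j
    fin_cases i <;> fin_cases j <;>
      simp [B, B', cayleyMengerMatrix, updateRow_apply, single_apply, two_mul]
  rw [hB, det_updateCol_add_smul_self _ (by decide), det_updateRow_add_smul_self _ (by decide)]

theorem natDegree_det_cayleyMengerMatrix_add_X_sq_le (a12 a13 a23 : R) {p14 p24 p34 : R[X]}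
    (h14 : p14.natDegree ≤ 1) (h24 : p24.natDegree ≤ 1) (h34 : p34.natDegree ≤ 1) :
    (cayleyMengerMatrix (C a12) (C a13) (p14 + X ^ 2) (C a23) (p24 + X ^ 2)
      (p34 + X ^ 2)).det.natDegree ≤ 2 := by
  have h44 : (2 * X ^ 2 : R[X]).natDegree ≤ 2 := by compute_degree
  rw [det_cayleyMengerMatrix_add_fourth]
  refine (natDegree_det_le_sum_add_sum _ (Pi.single 4 1) (Pi.single 4 1) fun i j => ?_).trans
    (by simp)
  fin_cases i <;> fin_cases j <;> simp [cayleyMengerMatrix, h14, h24, h34, h44]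

end CayleyMenger

theorem Polynomial.exists_eval_eq_of_natDegree_le_two {R : Type*} [CommRing R] {p : R[X]}
    (hp : p.natDegree ≤ 2) : ∃ a b c : R, ∀ t, p.eval t = a * t ^ 2 + b * t + c :=
  ⟨p.coeff 2, p.coeff 1, p.coeff 0, fun t => by
    rw [eval_eq_sum_range' (Nat.lt_succ_of_le hp), Finset.sum_range_succ, Finset.sum_range_succ,
      Finset.sum_range_one]
    ring⟩

/-- Ankum's observation: `t ↦ CM(d₁₂, d₁₃, d₁₄+t, d₂₃, d₂₄+t, d₃₄+t)` is a
polynomial of degree at most 2 in `t`. -/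
theorem ankum_observation (d12 d13 d14 d23 d24 d34 : ℝ) :
    ∃ α β γ : ℝ, ∀ t : ℝ,
      CM d12 d13 (d14 + t) d23 (d24 + t) (d34 + t) = α * t^2 + β * t + γ := by
  obtain ⟨a, b, c, hp⟩ := exists_eval_eq_of_natDegree_le_two
    (natDegree_det_cayleyMengerMatrix_add_X_sq_le (d12 ^ 2) (d13 ^ 2) (d23 ^ 2)
      (natDegree_linear_le (a := 2 * d14) (b := d14 ^ 2))
      (natDegree_linear_le (a := 2 * d24) (b := d24 ^ 2))
      (natDegree_linear_le (a := 2 * d34) (b := d34 ^ 2)))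
  refine ⟨a / 2, b / 2, c / 2, fun t => ?_⟩
  have hsq : ∀ d, 2 * d * t + d ^ 2 + t ^ 2 = (d + t) ^ 2 := fun d => by ring
  have heval := hp t
  rw [← coe_evalRingHom, RingHom.map_det, RingHom.mapMatrix_cayleyMengerMatrix] at heval
  simp only [coe_evalRingHom, eval_add, eval_mul, eval_C, eval_X, eval_pow, hsq] at heval
  rw [CM_eq_det_cayleyMengerMatrix, heval]
  ring
end

section
/- Neiss' identity: H(d₁₂,d₁₃,d₂₃)·H(d₁₂,d₂₄,d₁₄) = D₁₂² + (2d₁₂)²·CM(d₁₂,d₁₃,d₁₄,d₂₃,d₂₄,d₃₄), where D₁₂ is the determinant of the 4×4 matrix [[0,1,1,1],[1,0,d₁₂²,d₁₄²],[1,d₁₂²,0,d₂₄²],[1,d₁₃²,d₂₃²,d₃₄²]]. -/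
/-- The Heron polynomial. -/
def H (a b c : ℝ) : ℝ := 2*a^2*b^2 + 2*b^2*c^2 + 2*c^2*a^2 - a^4 - b^4 - c^4

/-- The auxiliary 4×4 determinant `D₁₂`. -/
def D12 (d12 d13 d14 d23 d24 d34 : ℝ) : ℝ :=
  Matrix.det !![(0 : ℝ), 1, 1, 1;
                1, 0, d12^2, d14^2;
                1, d12^2, 0, d24^2;
                1, d13^2, d23^2, d34^2]

/-!
Index the rows and columns of the 5×5 Cayley–Menger matrix `M` by the border and the points
`1, 2, 3, 4`. Neiss' identity is the Desnanot–Jacobi (Dodgson condensation) identity for `M` and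
the pair of indices `3, 4`: deleting both gives the Cayley–Menger matrix of the segment `12`, of
determinant `2 d₁₂²`; deleting one of them gives that of the triangle `124` or `123`, of
determinant `-H`; and the two mixed minors are the matrix of `D₁₂` and its transpose.
-/

open Matrix

theorem desnanot_jacobi_fin_five {R : Type*} [CommRing R] (A : Matrix (Fin 5) (Fin 5) R) :
    A.det * (A.submatrix ![0, 1, 2] ![0, 1, 2]).det =
      (A.submatrix ![0, 1, 2, 3] ![0, 1, 2, 3]).det * (A.submatrix ![0, 1, 2, 4] ![0, 1, 2, 4]).det -
      (A.submatrix ![0, 1, 2, 3] ![0, 1, 2, 4]).det * (A.submatrix ![0, 1, 2, 4] ![0, 1, 2, 3]).det := by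
  simp only [det_succ_row_zero (n := 4), det_succ_row_zero (n := 3), det_fin_three,
    Fin.sum_univ_succ, Fin.sum_univ_zero, submatrix_apply]
  simp [Fin.succAbove]
  ring

theorem det_cayleyMenger_triangle (a b c : ℝ) :
    !![(0 : ℝ), 1, 1, 1; 1, 0, a^2, b^2; 1, a^2, 0, c^2; 1, b^2, c^2, 0].det = -H a b c := by
  simp [det_succ_row_zero, Fin.sum_univ_succ, Fin.succAbove, H]
  ring

theorem H_right_comm (a b c : ℝ) : H a b c = H a c b := by
  unfold H
  ring

/-- Neiss' identity. -/
theorem neiss_identity (d12 d13 d14 d23 d24 d34 : ℝ) :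
    H d12 d13 d23 * H d12 d24 d14 =
      (D12 d12 d13 d14 d23 d24 d34)^2 +
        (2 * d12)^2 * CM d12 d13 d14 d23 d24 d34 := by
  set M : Matrix (Fin 5) (Fin 5) ℝ := !![0, 1, 1, 1, 1;
    1, 0, d12^2, d13^2, d14^2;
    1, d12^2, 0, d23^2, d24^2;
    1, d13^2, d23^2, 0, d34^2;
    1, d14^2, d24^2, d34^2, 0]
  have hM : M.det = 2 * CM d12 d13 d14 d23 d24 d34 := by
    unfold CM
    ring
  have h12 : (M.submatrix ![0, 1, 2] ![0, 1, 2]).det = 2 * d12 ^ 2 := by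
    rw [det_fin_three]
    simp [M]
    ring
  have h123 : (M.submatrix ![0, 1, 2, 3] ![0, 1, 2, 3]).det = -H d12 d13 d23 := by
    rw [← det_cayleyMenger_triangle]
    congr 1; ext i j; fin_cases i <;> fin_cases j <;> rfl
  have h124 : (M.submatrix ![0, 1, 2, 4] ![0, 1, 2, 4]).det = -H d12 d24 d14 := by
    rw [H_right_comm, ← det_cayleyMenger_triangle]
    congr 1; ext i j; fin_cases i <;> fin_cases j <;> rfl
  have hD : (M.submatrix ![0, 1, 2, 3] ![0, 1, 2, 4]).det = D12 d12 d13 d14 d23 d24 d34 := by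
    unfold D12
    congr 1; ext i j; fin_cases i <;> fin_cases j <;> rfl
  have hDt : (M.submatrix ![0, 1, 2, 4] ![0, 1, 2, 3]).det = D12 d12 d13 d14 d23 d24 d34 := by
    rw [← hD, ← det_transpose]
    congr 1; ext i j; fin_cases i <;> fin_cases j <;> rfl
  have condensation := desnanot_jacobi_fin_five M
  rw [hM, h12, h123, h124, hD, hDt] at condensation
  linear_combination -condensation
end
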